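/- Under the assumptions of the PSN convergence setup with quadratic one-step analysis, the key inequality E[f(x^{k+1}) − f(x^k) | x^k] ≤ −(c/b − c/(2b²))‖z^k‖² + (λθ(c²−c)/(2b²))‖z^k‖² ≤ −(c/(2b))‖z^k‖² holds whenever b ≥ (c−1)λθ + 1, where z^k = (E[(M_Ŝ)⁻¹])^{1/2} ∇f(x^k). -/

import Mathlib

open Matrix BigOperators Finset

noncomputable section

/-- `A_S`: zero out entries of `A` outside rows/columns indexed by `S`. -/
def zeroPad {n : ℕ} (A : Matrix (Fin n) (Fin n) ℝ) (S : Finset (Fin n)) :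
    Matrix (Fin n) (Fin n) ℝ :=
  Matrix.of fun i j => if i ∈ S ∧ j ∈ S then A i j else 0

/-- `(M_S)⁻¹`: invert the principal submatrix `M_{SS}` in place, zeros elsewhere. -/
def inPlaceInv {n : ℕ} (M : Matrix (Fin n) (Fin n) ℝ) (S : Finset (Fin n)) :
    Matrix (Fin n) (Fin n) ℝ :=
  Matrix.of fun i j =>
    if hi : i ∈ S then
      if hj : j ∈ S then
        (M.submatrix (fun a : {x // x ∈ S} => (a : Fin n))
            (fun a : {x // x ∈ S} => (a : Fin n)))⁻¹ ⟨i, hi⟩ ⟨j, hj⟩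
      else 0
    else 0

/-- The positive semidefinite square root of a positive semidefinite matrix, as defined in
Mathlib (December 2024) under this name; it has since been removed from Mathlib. -/
noncomputable def Matrix.PosSemidef.sqrt {n : Type*} [Fintype n] [DecidableEq n]
    {A : Matrix n n ℝ} (hA : A.PosSemidef) : Matrix n n ℝ :=
  hA.1.eigenvectorUnitary.1 * diagonal ((↑) ∘ (√·) ∘ hA.1.eigenvalues) *
  (star hA.1.eigenvectorUnitary : Matrix n n ℝ)

/-!
Take expectations in the quadratic upper bound at the step `h = -(1/b) ∑ᵢ (M_{Sᵢ})⁻¹ ∇f(x)`.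
The linear term gives `-(c/b) ⟪∇f, E[(M_Ŝ)⁻¹] ∇f⟫ = -(c/b) ‖z‖²`. In the quadratic term the `c`
diagonal terms equal the same quantity, because `(M_S)⁻¹ M (M_S)⁻¹ = (M_S)⁻¹`, while by
independence each of the `c² - c` off-diagonal terms equals `⟪u, M u⟫` with
`u = E[(M_Ŝ)⁻¹] ∇f = E[(M_Ŝ)⁻¹]^{1/2} z`. Writing `M = G^{1/2} Y G^{1/2}` gives
`⟪u, M u⟫ ≤ λ ‖G^{1/2} u‖² = λ ‖C z‖²` with `C = G^{1/2} E[(M_Ŝ)⁻¹]^{1/2}`, and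
`‖C z‖² ≤ λ_max(C Cᵀ) ‖z‖² = θ ‖z‖²`. The second inequality is the algebra of
`b ≥ (c - 1) λ θ + 1`.
-/

lemma Matrix.IsSymm.mulVec_dotProduct {m R : Type*} [Fintype m] [CommSemiring R]
    {A : Matrix m m R} (hA : A.IsSymm) (u v : m → R) : (A *ᵥ u) ⬝ᵥ v = u ⬝ᵥ A *ᵥ v := by
  rw [dotProduct_mulVec, ← mulVec_transpose, hA.eq]

lemma dotProduct_sq_le_dotProduct_self_mul_dotProduct_self {m : Type*} [Fintype m] (u v : m → ℝ) :
    (u ⬝ᵥ v) ^ 2 ≤ (u ⬝ᵥ u) * (v ⬝ᵥ v) := by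
  simpa only [dotProduct, sq] using Finset.sum_mul_sq_le_sq_mul_sq Finset.univ u v

open MatrixOrder in
lemma Matrix.PosSemidef.sqrt_eq_cfcSqrt {m : Type*} [Fintype m] [DecidableEq m]
    {A : Matrix m m ℝ} (hA : A.PosSemidef) : hA.sqrt = CFC.sqrt A := by
  rw [CFC.sqrt_eq_real_sqrt A hA.nonneg, cfcₙ_eq_cfc, hA.1.cfc_eq, IsHermitian.cfc,
    Unitary.conjStarAlgAut_apply]
  rfl

open MatrixOrder in
lemma Matrix.PosSemidef.sqrt_mul_sqrt {m : Type*} [Fintype m] [DecidableEq m]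
    {A : Matrix m m ℝ} (hA : A.PosSemidef) : hA.sqrt * hA.sqrt = A := by
  rw [hA.sqrt_eq_cfcSqrt, CFC.sqrt_mul_sqrt_self A hA.nonneg]

open MatrixOrder in
lemma Matrix.PosSemidef.isSymm_sqrt {m : Type*} [Fintype m] [DecidableEq m]
    {A : Matrix m m ℝ} (hA : A.PosSemidef) : hA.sqrt.IsSymm := by
  rw [hA.sqrt_eq_cfcSqrt, ← isHermitian_iff_isSymm]
  exact (CFC.sqrt_nonneg A).posSemidef.1

lemma Matrix.PosSemidef.dotProduct_mulVec_eq_sqrt {m : Type*} [Fintype m] [DecidableEq m]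
    {A : Matrix m m ℝ} (hA : A.PosSemidef) (v : m → ℝ) :
    v ⬝ᵥ A *ᵥ v = (hA.sqrt *ᵥ v) ⬝ᵥ (hA.sqrt *ᵥ v) := by
  conv_lhs => rw [← hA.sqrt_mul_sqrt, ← mulVec_mulVec]
  rw [hA.isSymm_sqrt.mulVec_dotProduct]

open MatrixOrder in
lemma Matrix.IsHermitian.dotProduct_mulVec_le_iSup_eigenvalues_mul {m : Type*} [Fintype m]
    [DecidableEq m] {A : Matrix m m ℝ} (hA : A.IsHermitian) (x : m → ℝ) :
    x ⬝ᵥ A *ᵥ x ≤ (⨆ i, hA.eigenvalues i) * (x ⬝ᵥ x) := by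
  have hle : A ≤ algebraMap ℝ _ (⨆ i, hA.eigenvalues i) := by
    refine le_algebraMap_of_spectrum_le fun r hr => ?_
    rw [hA.spectrum_real_eq_range_eigenvalues] at hr
    obtain ⟨i, rfl⟩ := hr
    exact le_ciSup (Set.finite_range _).bddAbove i
  simpa only [Algebra.algebraMap_eq_smul_one, sub_mulVec, smul_mulVec, one_mulVec, dotProduct_sub,
    dotProduct_smul, star_trivial, smul_eq_mul, sub_nonneg] using
    (le_iff.mp hle).dotProduct_mulVec_nonneg x

lemma dotProduct_mulVec_le_of_eq_inv_mul_mul_inv {m : Type*} [Fintype m] [DecidableEq m]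
    {M P Y : Matrix m m ℝ} (hP : P.IsSymm) (hPdet : IsUnit P.det) (hYdef : Y = P⁻¹ * M * P⁻¹)
    (hY : Y.IsHermitian) (u : m → ℝ) :
    u ⬝ᵥ M *ᵥ u ≤ (⨆ i, hY.eigenvalues i) * ((P *ᵥ u) ⬝ᵥ (P *ᵥ u)) := by
  have hconj : (P *ᵥ u) ⬝ᵥ Y *ᵥ (P *ᵥ u) = u ⬝ᵥ M *ᵥ u := by
    have hPu : P⁻¹ *ᵥ (P *ᵥ u) = u := by rw [mulVec_mulVec, nonsing_inv_mul _ hPdet, one_mulVec]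
    rw [hYdef, ← mulVec_mulVec, ← mulVec_mulVec, hPu, ← hP.inv.mulVec_dotProduct, hPu]
  exact hconj ▸ hY.dotProduct_mulVec_le_iSup_eigenvalues_mul (P *ᵥ u)

lemma mulVec_dotProduct_mulVec_le_of_eq_mul_transpose {k m : Type*} [Fintype k] [Fintype m]
    [DecidableEq k] {C : Matrix k m ℝ} {X : Matrix k k ℝ} (hXC : X = C * Cᵀ)
    (hX : X.IsHermitian) (z : m → ℝ) :
    (C *ᵥ z) ⬝ᵥ (C *ᵥ z) ≤ (⨆ i, hX.eigenvalues i) * (z ⬝ᵥ z) := by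
  set θ := ⨆ i, hX.eigenvalues i
  set v := C *ᵥ z
  have hXpsd : X.PosSemidef := by
    simpa [hXC, conjTranspose_eq_transpose_of_trivial] using posSemidef_self_mul_conjTranspose C
  have hθ : 0 ≤ θ := Real.iSup_nonneg hXpsd.eigenvalues_nonneg
  have hCv : (Cᵀ *ᵥ v) ⬝ᵥ (Cᵀ *ᵥ v) ≤ θ * (v ⬝ᵥ v) := by
    have h : v ⬝ᵥ X *ᵥ v ≤ θ * (v ⬝ᵥ v) := hX.dotProduct_mulVec_le_iSup_eigenvalues_mul v
    rwa [hXC, ← mulVec_mulVec, dotProduct_mulVec, ← mulVec_transpose] at h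
  -- `v ⬝ᵥ v = z ⬝ᵥ Cᵀ v`, so Cauchy–Schwarz gives `(v ⬝ᵥ v)² ≤ (z ⬝ᵥ z) θ (v ⬝ᵥ v)`.
  have hcs : (v ⬝ᵥ v) ^ 2 ≤ (z ⬝ᵥ z) * (θ * (v ⬝ᵥ v)) := by
    have h := dotProduct_sq_le_dotProduct_self_mul_dotProduct_self z (Cᵀ *ᵥ v)
    rw [dotProduct_mulVec, vecMul_transpose] at h
    exact h.trans (mul_le_mul_of_nonneg_left hCv (dotProduct_self_star_nonneg z))
  have hz : 0 ≤ z ⬝ᵥ z := dotProduct_self_star_nonneg z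
  nlinarith [mul_nonneg hθ hz]

lemma mulVec_dotProduct_mulVec_mulVec_le_iSup_mul_iSup {m : Type*} [Fintype m] [DecidableEq m]
    {G M E X Y : Matrix m m ℝ} (hG : G.PosDef) (hM : M.PosSemidef) (hE : E.PosSemidef)
    (hXdef : X = hG.posSemidef.sqrt * E * hG.posSemidef.sqrt)
    (hYdef : Y = (hG.posSemidef.sqrt)⁻¹ * M * (hG.posSemidef.sqrt)⁻¹)
    (hX : X.IsHermitian) (hY : Y.IsHermitian) (v : m → ℝ) :
    (E *ᵥ v) ⬝ᵥ M *ᵥ (E *ᵥ v) ≤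
      (⨆ i, hY.eigenvalues i) * (⨆ i, hX.eigenvalues i) * ((hE.sqrt *ᵥ v) ⬝ᵥ (hE.sqrt *ᵥ v)) := by
  set P := hG.posSemidef.sqrt
  set R := hE.sqrt
  have hPdet : IsUnit P.det := by
    have h := congrArg det hG.posSemidef.sqrt_mul_sqrt
    rw [det_mul] at h
    exact isUnit_of_mul_isUnit_left (h ▸ hG.det_pos.ne'.isUnit)
  have hlam : 0 ≤ ⨆ i, hY.eigenvalues i := by
    have hYpsd : Y.PosSemidef := by
      have h := hM.conjTranspose_mul_mul_same P⁻¹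
      rwa [conjTranspose_eq_transpose_of_trivial, transpose_nonsing_inv,
        hG.posSemidef.isSymm_sqrt.eq, ← hYdef] at h
    exact Real.iSup_nonneg hYpsd.eigenvalues_nonneg
  have hXC : X = (P * R) * (P * R)ᵀ := by
    rw [hXdef, transpose_mul, hE.isSymm_sqrt.eq, hG.posSemidef.isSymm_sqrt.eq,
      Matrix.mul_assoc P R, ← Matrix.mul_assoc R R, hE.sqrt_mul_sqrt, Matrix.mul_assoc]
  have hEv : E *ᵥ v = R *ᵥ (R *ᵥ v) := by rw [mulVec_mulVec, hE.sqrt_mul_sqrt]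
  calc (E *ᵥ v) ⬝ᵥ M *ᵥ (E *ᵥ v)
      ≤ (⨆ i, hY.eigenvalues i) * ((P *ᵥ (E *ᵥ v)) ⬝ᵥ (P *ᵥ (E *ᵥ v))) :=
        dotProduct_mulVec_le_of_eq_inv_mul_mul_inv hG.posSemidef.isSymm_sqrt hPdet hYdef hY _
    _ = (⨆ i, hY.eigenvalues i) * (((P * R) *ᵥ (R *ᵥ v)) ⬝ᵥ ((P * R) *ᵥ (R *ᵥ v))) := by
        rw [hEv, mulVec_mulVec]
    _ ≤ (⨆ i, hY.eigenvalues i) * ((⨆ i, hX.eigenvalues i) * ((R *ᵥ v) ⬝ᵥ (R *ᵥ v))) :=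
        mul_le_mul_of_nonneg_left (mulVec_dotProduct_mulVec_le_of_eq_mul_transpose hXC hX _) hlam
    _ = _ := (mul_assoc _ _ _).symm

def coordProj {n : ℕ} (S : Finset (Fin n)) : Matrix S (Fin n) ℝ :=
  (1 : Matrix (Fin n) (Fin n) ℝ).submatrix Subtype.val id

lemma coordProj_mul_mul_transpose {n : ℕ} (M : Matrix (Fin n) (Fin n) ℝ) (S : Finset (Fin n)) :
    coordProj S * M * (coordProj S)ᵀ = M.submatrix Subtype.val Subtype.val := by
  rw [coordProj, transpose_submatrix, transpose_one,
    show (1 : Matrix (Fin n) (Fin n) ℝ).submatrix Subtype.val id * M = M.submatrix Subtype.val id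
      from one_submatrix_mul _ (Equiv.refl _) M]
  exact mul_submatrix_one (Equiv.refl _) _ _

lemma Finset.sum_coe_sort_ite_val_eq_mul {α R : Type*} [DecidableEq α] [NonAssocSemiring R]
    (s : Finset α) (f : s → R) (j : α) :
    ∑ x : s, (if ↑x = j then 1 else 0) * f x = if h : j ∈ s then f ⟨j, h⟩ else 0 := by
  split_ifs with h
  · rw [Fintype.sum_eq_single ⟨j, h⟩] <;> aesop
  · exact Fintype.sum_eq_zero _ fun x => by aesop

lemma inPlaceInv_eq_transpose_mul_inv_mul {n : ℕ} (M : Matrix (Fin n) (Fin n) ℝ)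
    (S : Finset (Fin n)) :
    inPlaceInv M S = (coordProj S)ᵀ * (coordProj S * M * (coordProj S)ᵀ)⁻¹ * coordProj S := by
  rw [coordProj_mul_mul_transpose]
  ext i j
  simp only [Matrix.mul_apply, coordProj, transpose_apply, submatrix_apply, one_apply, id,
    Finset.sum_coe_sort_ite_val_eq_mul]
  simp_rw [mul_comm _ (ite _ _ _), Finset.sum_coe_sort_ite_val_eq_mul]
  by_cases hi : i ∈ S <;> simp [inPlaceInv, hi]

lemma isSymm_inPlaceInv {n : ℕ} {M : Matrix (Fin n) (Fin n) ℝ} (hM : M.IsSymm)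
    (S : Finset (Fin n)) : (inPlaceInv M S).IsSymm := by
  rw [IsSymm, inPlaceInv_eq_transpose_mul_inv_mul]
  simp only [transpose_mul, transpose_transpose, transpose_nonsing_inv, hM.eq, Matrix.mul_assoc]

lemma inPlaceInv_mul_mul_inPlaceInv {n : ℕ} {M : Matrix (Fin n) (Fin n) ℝ} {S : Finset (Fin n)}
    (hS : IsUnit (M.submatrix (Subtype.val : S → Fin n) Subtype.val).det) :
    inPlaceInv M S * M * inPlaceInv M S = inPlaceInv M S := by
  rw [← coordProj_mul_mul_transpose] at hS
  rw [inPlaceInv_eq_transpose_mul_inv_mul]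
  set B := coordProj S * M * (coordProj S)ᵀ
  calc (coordProj S)ᵀ * B⁻¹ * coordProj S * M * ((coordProj S)ᵀ * B⁻¹ * coordProj S)
      = (coordProj S)ᵀ * (B⁻¹ * B * B⁻¹) * coordProj S := by simp only [B, Matrix.mul_assoc]
    _ = (coordProj S)ᵀ * B⁻¹ * coordProj S := by rw [nonsing_inv_mul _ hS, Matrix.one_mul]

lemma inPlaceInv_mulVec_dotProduct_mulVec {n : ℕ} {M : Matrix (Fin n) (Fin n) ℝ}
    (hM : M.PosDef) (S : Finset (Fin n)) (v : Fin n → ℝ) :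
    (inPlaceInv M S *ᵥ v) ⬝ᵥ M *ᵥ (inPlaceInv M S *ᵥ v) = v ⬝ᵥ inPlaceInv M S *ᵥ v := by
  have hS := (hM.submatrix (Subtype.val_injective (p := (· ∈ S)))).isUnit
  rw [(isSymm_inPlaceInv (isHermitian_iff_isSymm.mp hM.1) S).mulVec_dotProduct, mulVec_mulVec,
    mulVec_mulVec, inPlaceInv_mul_mul_inPlaceInv ((isUnit_iff_isUnit_det _).mp hS)]

section ProductWeights

variable {α ι m R : Type*} [Fintype α] [Fintype ι] [DecidableEq ι] [Fintype m]

section CommSemiring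

variable [CommSemiring R]

lemma sum_prod_mul_prod (w : α → R) (φ : ι → α → R) :
    ∑ s : ι → α, (∏ k, w (s k)) * ∏ k, φ k (s k) = ∏ k, ∑ a, w a * φ k a := by
  simp_rw [← Finset.prod_mul_distrib]
  exact (Fintype.prod_sum fun k a => w a * φ k a).symm

variable {w : α → R}

lemma sum_prod_mul_apply (hw : ∑ a, w a = 1) (i : ι) (φ : α → R) :
    ∑ s : ι → α, (∏ k, w (s k)) * φ (s i) = ∑ a, w a * φ a := by
  calc ∑ s : ι → α, (∏ k, w (s k)) * φ (s i)
      = ∑ s : ι → α, (∏ k, w (s k)) * ∏ k, (if k = i then φ (s k) else 1) := by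
        simp [Finset.prod_ite_eq']
    _ = ∏ k, ∑ a, w a * (if k = i then φ a else 1) :=
        sum_prod_mul_prod w fun k a => if k = i then φ a else 1
    _ = ∑ a, w a * φ a := by
        rw [Fintype.prod_eq_single i]
        · simp
        · intro k hk
          simp [hk, hw]

lemma sum_prod_mul_apply_mul_apply (hw : ∑ a, w a = 1) {i j : ι} (hij : i ≠ j)
    (φ ψ : α → R) :
    ∑ s : ι → α, (∏ k, w (s k)) * (φ (s i) * ψ (s j)) = (∑ a, w a * φ a) * ∑ a, w a * ψ a := by
  calc ∑ s : ι → α, (∏ k, w (s k)) * (φ (s i) * ψ (s j))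
      = ∑ s : ι → α, (∏ k, w (s k)) *
          ∏ k, (if k = i then φ (s k) else if k = j then ψ (s k) else 1) := by
        refine Finset.sum_congr rfl fun s _ => congrArg _ ?_
        rw [Fintype.prod_eq_mul i j hij]
        · simp [hij.symm]
        · intro k hk
          simp [hk.1, hk.2]
    _ = ∏ k, ∑ a, w a * (if k = i then φ a else if k = j then ψ a else 1) :=
        sum_prod_mul_prod w fun k a => if k = i then φ a else if k = j then ψ a else 1
    _ = (∑ a, w a * φ a) * ∑ a, w a * ψ a := by
        rw [Fintype.prod_eq_mul i j hij]
        · simp [hij.symm]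
        · intro k hk
          simp [hk.1, hk.2, hw]

lemma sum_prod_mul_apply_apply (hw : ∑ a, w a = 1) {i j : ι} (hij : i ≠ j)
    (F : α → α → R) :
    ∑ s : ι → α, (∏ k, w (s k)) * F (s i) (s j) = ∑ a, ∑ b, w a * w b * F a b := by
  classical
  calc ∑ s : ι → α, (∏ k, w (s k)) * F (s i) (s j)
      = ∑ s : ι → α, ∑ a, ∑ b, (∏ k, w (s k)) *
          ((if s i = a then 1 else 0) * (if s j = b then 1 else 0)) * F a b := by
        simp [mul_ite, ite_mul, Finset.sum_ite_eq]
    _ = ∑ a, ∑ b, (∑ s : ι → α, (∏ k, w (s k)) *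
          ((if s i = a then 1 else 0) * (if s j = b then 1 else 0))) * F a b := by
        simp_rw [Finset.sum_mul]
        rw [Finset.sum_comm]
        exact Finset.sum_congr rfl fun a _ => Finset.sum_comm
    _ = ∑ a, ∑ b, w a * w b * F a b := by
        refine Finset.sum_congr rfl fun a _ => Finset.sum_congr rfl fun b _ => ?_
        rw [sum_prod_mul_apply_mul_apply hw hij (fun c => if c = a then 1 else 0)
          (fun c => if c = b then 1 else 0)]
        simp

lemma sum_prod_mul_dotProduct_sum (hw : ∑ a, w a = 1) (v : m → R) (d : α → m → R) :
    ∑ s : ι → α, (∏ k, w (s k)) * (v ⬝ᵥ ∑ i, d (s i)) =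
      Fintype.card ι * (v ⬝ᵥ ∑ a, w a • d a) := by
  simp_rw [dotProduct_sum, Finset.mul_sum]
  rw [Finset.sum_comm]
  simp [sum_prod_mul_apply hw _ (fun a => v ⬝ᵥ d a), dotProduct_smul, Finset.mul_sum]

end CommSemiring

lemma sum_prod_mul_sum_dotProduct_mulVec_sum [CommRing R] {w : α → R}
    (hw : ∑ a, w a = 1) (M : Matrix m m R)
    (d : α → m → R) :
    ∑ s : ι → α, (∏ k, w (s k)) * ((∑ i, d (s i)) ⬝ᵥ M *ᵥ ∑ i, d (s i)) =
      Fintype.card ι * ∑ a, w a * (d a ⬝ᵥ M *ᵥ d a) +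
        (Fintype.card ι ^ 2 - Fintype.card ι) *
          ((∑ a, w a • d a) ⬝ᵥ M *ᵥ ∑ a, w a • d a) := by
  set Q := ∑ a, w a * (d a ⬝ᵥ M *ᵥ d a)
  set r := (∑ a, w a • d a) ⬝ᵥ M *ᵥ ∑ a, w a • d a
  have hpair : ∀ i j : ι, ∑ s : ι → α, (∏ k, w (s k)) * (d (s i) ⬝ᵥ M *ᵥ d (s j)) =
      if i = j then Q else r := by
    intro i j
    split_ifs with h
    · subst h
      exact sum_prod_mul_apply hw i fun a => d a ⬝ᵥ M *ᵥ d a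
    · rw [sum_prod_mul_apply_apply hw h fun a b => d a ⬝ᵥ M *ᵥ d b]
      simp only [r, sum_dotProduct, mulVec_sum, dotProduct_sum, mulVec_smul, smul_dotProduct,
        dotProduct_smul, smul_eq_mul, mul_assoc]
      exact Finset.sum_congr rfl fun _ _ => Finset.sum_congr rfl fun _ _ => mul_left_comm _ _ _
  calc ∑ s : ι → α, (∏ k, w (s k)) * ((∑ i, d (s i)) ⬝ᵥ M *ᵥ ∑ i, d (s i))
      = ∑ j, ∑ i, ∑ s : ι → α, (∏ k, w (s k)) * (d (s i) ⬝ᵥ M *ᵥ d (s j)) := by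
        simp_rw [mulVec_sum, dotProduct_sum, sum_dotProduct, Finset.mul_sum]
        rw [Finset.sum_comm]
        exact Finset.sum_congr rfl fun i _ => Finset.sum_comm
    _ = ∑ j : ι, ∑ i : ι, if i = j then Q else r := by simp_rw [hpair]
    _ = _ := by
        have hrow : ∀ j : ι, ∑ i : ι, (if i = j then Q else r) = Q - r + Fintype.card ι * r := by
          intro j
          simp_rw [show ∀ i, (if i = j then Q else r) = (if i = j then Q - r else 0) + r from
            fun i => by split_ifs <;> ring]
          simp [Finset.sum_add_distrib]
        simp only [hrow, Finset.sum_const, Finset.card_univ, nsmul_eq_mul]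
        ring

end ProductWeights

lemma sum_prod_mul_sub_le {m α ι : Type*} [Fintype m] [Fintype α] [Fintype ι] [DecidableEq ι]
    {f : (m → ℝ) → ℝ} {g : (m → ℝ) → m → ℝ} {M : Matrix m m ℝ}
    (hupper : ∀ x h, f (x + h) ≤ f x + (g x ⬝ᵥ h) + (1/2) * (h ⬝ᵥ (M *ᵥ h)))
    {w : α → ℝ} (hw0 : ∀ a, 0 ≤ w a) (hw1 : ∑ a, w a = 1) (d : α → m → ℝ) (t : ℝ)
    (x : m → ℝ) :
    ∑ s : ι → α, (∏ k, w (s k)) * (f (x - t • ∑ i, d (s i)) - f x) ≤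
      -(t * Fintype.card ι) * (g x ⬝ᵥ ∑ a, w a • d a) +
        t ^ 2 / 2 * (Fintype.card ι * ∑ a, w a * (d a ⬝ᵥ M *ᵥ d a) +
          (Fintype.card ι ^ 2 - Fintype.card ι) * ((∑ a, w a • d a) ⬝ᵥ M *ᵥ ∑ a, w a • d a)) := by
  have hstep : ∀ v, f (x - t • v) - f x ≤ -t * (g x ⬝ᵥ v) + t ^ 2 / 2 * (v ⬝ᵥ M *ᵥ v) := by
    intro v
    have h := hupper x (-(t • v))
    rw [← sub_eq_add_neg, dotProduct_neg, mulVec_neg, neg_dotProduct, dotProduct_neg, mulVec_smul,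
      smul_dotProduct, dotProduct_smul, dotProduct_smul, smul_eq_mul, smul_eq_mul, smul_eq_mul] at h
    linarith
  calc ∑ s : ι → α, (∏ k, w (s k)) * (f (x - t • ∑ i, d (s i)) - f x)
      ≤ ∑ s : ι → α, (∏ k, w (s k)) * (-t * (g x ⬝ᵥ ∑ i, d (s i)) +
          t ^ 2 / 2 * ((∑ i, d (s i)) ⬝ᵥ M *ᵥ ∑ i, d (s i))) :=
        Finset.sum_le_sum fun s _ =>
          mul_le_mul_of_nonneg_left (hstep _) (Finset.prod_nonneg fun k _ => hw0 (s k))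
    _ = -t * ∑ s : ι → α, (∏ k, w (s k)) * (g x ⬝ᵥ ∑ i, d (s i)) +
          t ^ 2 / 2 * ∑ s : ι → α, (∏ k, w (s k)) * ((∑ i, d (s i)) ⬝ᵥ M *ᵥ ∑ i, d (s i)) := by
        simp only [mul_add, Finset.sum_add_distrib, Finset.mul_sum, mul_left_comm _ (-t),
          mul_left_comm _ (t ^ 2 / 2)]
    _ = _ := by
        rw [sum_prod_mul_dotProduct_sum hw1, sum_prod_mul_sum_dotProduct_mulVec_sum hw1]
        ring

lemma sum_prod_mul_sub_le_of_inPlaceInv {n : ℕ} {ι : Type*} [Fintype ι] [DecidableEq ι]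
    {f : (Fin n → ℝ) → ℝ} {g : (Fin n → ℝ) → Fin n → ℝ} {M : Matrix (Fin n) (Fin n) ℝ}
    (hM : M.PosDef) (hupper : ∀ x h, f (x + h) ≤ f x + (g x ⬝ᵥ h) + (1/2) * (h ⬝ᵥ (M *ᵥ h)))
    {w : Finset (Fin n) → ℝ} (hw0 : ∀ S, 0 ≤ w S) (hw1 : ∑ S, w S = 1) (t : ℝ)
    (x : Fin n → ℝ) :
    ∑ s : ι → Finset (Fin n), (∏ k, w (s k)) *
        (f (x - t • ∑ i, inPlaceInv M (s i) *ᵥ g x) - f x) ≤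
      -(t * Fintype.card ι) * (g x ⬝ᵥ (∑ S, w S • inPlaceInv M S) *ᵥ g x) +
        t ^ 2 / 2 * (Fintype.card ι * (g x ⬝ᵥ (∑ S, w S • inPlaceInv M S) *ᵥ g x) +
          (Fintype.card ι ^ 2 - Fintype.card ι) *
            (((∑ S, w S • inPlaceInv M S) *ᵥ g x) ⬝ᵥ M *ᵥ (∑ S, w S • inPlaceInv M S) *ᵥ g x)) := by
  have hmean : ∑ S, w S • (inPlaceInv M S *ᵥ g x) = (∑ S, w S • inPlaceInv M S) *ᵥ g x := by
    simp only [sum_mulVec, smul_mulVec]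
  have hdiag : ∑ S, w S * ((inPlaceInv M S *ᵥ g x) ⬝ᵥ M *ᵥ (inPlaceInv M S *ᵥ g x)) =
      g x ⬝ᵥ (∑ S, w S • inPlaceInv M S) *ᵥ g x := by
    simp only [inPlaceInv_mulVec_dotProduct_mulVec hM, ← hmean, dotProduct_sum, dotProduct_smul,
      smul_eq_mul]
  simpa only [hmean, hdiag] using
    sum_prod_mul_sub_le (ι := ι) hupper hw0 hw1 (fun S => inPlaceInv M S *ᵥ g x) t x

theorem stmt7_general {n : ℕ} (c : ℕ) (b : ℝ) (hbpos : 0 < b)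
    (f : (Fin n → ℝ) → ℝ) (g : (Fin n → ℝ) → (Fin n → ℝ))
    (G M : Matrix (Fin n) (Fin n) ℝ) (hG : G.PosDef) (hM : M.PosDef)
    (hupper : ∀ x h, f (x + h) ≤ f x + (g x ⬝ᵥ h) + (1/2) * (h ⬝ᵥ (M *ᵥ h)))
    (w : Finset (Fin n) → ℝ) (hw0 : ∀ S, 0 ≤ w S)
    (hw1 : ∑ S : Finset (Fin n), w S = 1)
    (EM X Y : Matrix (Fin n) (Fin n) ℝ)
    (hEMdef : EM = ∑ S : Finset (Fin n), w S • inPlaceInv M S)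
    (hEM : EM.PosSemidef)
    (hXdef : X = hG.posSemidef.sqrt * EM * hG.posSemidef.sqrt)
    (hYdef : Y = (hG.posSemidef.sqrt)⁻¹ * M * (hG.posSemidef.sqrt)⁻¹)
    (hX : X.IsHermitian) (hY : Y.IsHermitian)
    (lam θ : ℝ)
    (hlam : lam = ⨆ i, hY.eigenvalues i)
    (hθ : θ = ⨆ i, hX.eigenvalues i)
    (hb : ((c : ℝ) - 1) * lam * θ + 1 ≤ b)
    (x : Fin n → ℝ) (z : Fin n → ℝ) (hz : z = hEM.sqrt *ᵥ g x) :
    (∑ s : Fin c → Finset (Fin n), (∏ i, w (s i)) *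
        (f (x - (1/b) • ∑ i, (inPlaceInv M (s i)) *ᵥ g x) - f x)) ≤
      -((c : ℝ)/b - (c : ℝ)/(2*b^2)) * (z ⬝ᵥ z) +
        lam * θ * ((c : ℝ)^2 - (c : ℝ))/(2*b^2) * (z ⬝ᵥ z) ∧
    -((c : ℝ)/b - (c : ℝ)/(2*b^2)) * (z ⬝ᵥ z) +
        lam * θ * ((c : ℝ)^2 - (c : ℝ))/(2*b^2) * (z ⬝ᵥ z) ≤
      -((c : ℝ)/(2*b)) * (z ⬝ᵥ z) := by
  have hstep := sum_prod_mul_sub_le_of_inPlaceInv (ι := Fin c) hM hupper hw0 hw1 (1 / b) x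
  rw [← hEMdef, hEM.dotProduct_mulVec_eq_sqrt, ← hz, Fintype.card_fin] at hstep
  have hr := mulVec_dotProduct_mulVec_mulVec_le_iSup_mul_iSup hG hM.posSemidef hEM hXdef hYdef
    hX hY (g x)
  rw [← hlam, ← hθ, ← hz] at hr
  have hc : 0 ≤ (c : ℝ) ^ 2 - c := sub_nonneg.mpr (by exact_mod_cast Nat.le_self_pow two_ne_zero c)
  have hzz : 0 ≤ z ⬝ᵥ z := dotProduct_self_star_nonneg z
  constructor
  · calc _ ≤ _ := hstep
      _ ≤ -(1 / b * c) * (z ⬝ᵥ z) +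
            (1 / b) ^ 2 / 2 * (c * (z ⬝ᵥ z) + (c ^ 2 - c) * (lam * θ * (z ⬝ᵥ z))) := by
          gcongr
      _ = _ := by ring
  · have hgap : 0 ≤ c * (z ⬝ᵥ z) * (b - (((c : ℝ) - 1) * lam * θ + 1)) / (2 * b ^ 2) := by
      have := sub_nonneg.mpr hb
      positivity
    calc _ = -((c : ℝ) / (2 * b)) * (z ⬝ᵥ z) -
          c * (z ⬝ᵥ z) * (b - (((c : ℝ) - 1) * lam * θ + 1)) / (2 * b ^ 2) := by
          field_simp
          ring
      _ ≤ _ := by linarith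

/-- Key one-step inequality of the PSN analysis: with `z = (E[(M_Ŝ)⁻¹])^{1/2} ∇f(x)`,
`E[f(x⁺) - f(x)] ≤ -(c/b - c/(2b²))‖z‖² + λθ(c²-c)/(2b²)‖z‖² ≤ -(c/(2b))‖z‖²`
whenever `b ≥ (c-1)λθ + 1`. -/
theorem stmt7 {n : ℕ} (hn : 0 < n) (c : ℕ) (hc : 0 < c) (b : ℝ) (hbpos : 0 < b)
    (f : (Fin n → ℝ) → ℝ) (g : (Fin n → ℝ) → (Fin n → ℝ))
    (G M : Matrix (Fin n) (Fin n) ℝ) (hG : G.PosDef) (hM : M.PosDef)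
    (hGM : (M - G).PosSemidef)
    (hlower : ∀ x h, f x + (g x ⬝ᵥ h) + (1/2) * (h ⬝ᵥ (G *ᵥ h)) ≤ f (x + h))
    (hupper : ∀ x h, f (x + h) ≤ f x + (g x ⬝ᵥ h) + (1/2) * (h ⬝ᵥ (M *ᵥ h)))
    (w : Finset (Fin n) → ℝ) (hw0 : ∀ S, 0 ≤ w S)
    (hw1 : ∑ S : Finset (Fin n), w S = 1) (hvac : w ∅ = 0)
    (hprop : ∀ i : Fin n,
      0 < ∑ S ∈ Finset.univ.filter (fun S : Finset (Fin n) => i ∈ S), w S)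
    (EM X Y : Matrix (Fin n) (Fin n) ℝ)
    (hEMdef : EM = ∑ S : Finset (Fin n), w S • inPlaceInv M S)
    (hEM : EM.PosSemidef)
    (hXdef : X = hG.posSemidef.sqrt * EM * hG.posSemidef.sqrt)
    (hYdef : Y = (hG.posSemidef.sqrt)⁻¹ * M * (hG.posSemidef.sqrt)⁻¹)
    (hX : X.IsHermitian) (hY : Y.IsHermitian)
    (lam θ : ℝ)
    (hlam : lam = ⨆ i, hY.eigenvalues i)
    (hθ : θ = ⨆ i, hX.eigenvalues i)
    (hb : ((c : ℝ) - 1) * lam * θ + 1 ≤ b)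
    (x : Fin n → ℝ) (z : Fin n → ℝ) (hz : z = hEM.sqrt *ᵥ g x) :
    (∑ s : Fin c → Finset (Fin n), (∏ i, w (s i)) *
        (f (x - (1/b) • ∑ i, (inPlaceInv M (s i)) *ᵥ g x) - f x)) ≤
      -((c : ℝ)/b - (c : ℝ)/(2*b^2)) * (z ⬝ᵥ z) +
        lam * θ * ((c : ℝ)^2 - (c : ℝ))/(2*b^2) * (z ⬝ᵥ z) ∧
    -((c : ℝ)/b - (c : ℝ)/(2*b^2)) * (z ⬝ᵥ z) +
        lam * θ * ((c : ℝ)^2 - (c : ℝ))/(2*b^2) * (z ⬝ᵥ z) ≤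
      -((c : ℝ)/(2*b)) * (z ⬝ᵥ z) :=
  stmt7_general c b hbpos f g G M hG hM hupper w hw0 hw1 EM X Y hEMdef hEM hXdef hYdef hX hY lam θ
    hlam hθ hb x z hz
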